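/- arXiv:0901.2445 — 3 statements merged into one kernel-verified Lean document; each statement's English description precedes it below -/
import Mathlib

section
/- With N_t the delayed renewal counting process with delay distribution G and inter-arrival distribution F, if F(t) < 1 then E[N_t²] - E[N_t] ≤ 2 F(t) E[N_t]/(1 - F(t)) ≤ 2 F(t) G(t)/(1 - F(t))². -/
open MeasureTheory ProbabilityTheory
open scoped ENNReal


private lemma aux_sum_odd (K : ℕ) : ∑ n ∈ Finset.range K, (2*n+1) = K^2 := by
  induction K with
  | zero => simp
  | succ k ih => rw [Finset.sum_range_succ, ih]; ring

private lemma aux_sq_le (a : ℕ → ℝ≥0∞)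
    (h01 : ∀ n, a n = 1 ∨ a n = 0) (hanti : ∀ m n, m ≤ n → a n ≤ a m) :
    (∑' n, a n) ^ 2 ≤ ∑' n : ℕ, (2*(n:ℝ≥0∞)+1) * a n := by
  classical
  by_cases h : ∃ n, a n = 0
  · set K := Nat.find h with hK
    have hzero : ∀ n, K ≤ n → a n = 0 := fun n hn =>
      le_antisymm ((hanti _ _ hn).trans_eq (Nat.find_spec h)) bot_le
    have hone : ∀ n, n < K → a n = 1 := fun n hn =>
      (h01 n).resolve_right (Nat.find_min h hn)
    have hsum : ∑' n, a n = (K : ℝ≥0∞) := by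
      rw [tsum_eq_sum (s := Finset.range K)
        (fun n hn => hzero n (by simpa using hn))]
      rw [Finset.sum_congr rfl (fun n hn => hone n (Finset.mem_range.mp hn))]
      simp
    have hsum2 : ∑' n : ℕ, (2*(n:ℝ≥0∞)+1) * a n = (K:ℝ≥0∞)^2 := by
      rw [tsum_eq_sum (s := Finset.range K)
        (fun n hn => by rw [hzero n (by simpa using hn), mul_zero])]
      calc ∑ n ∈ Finset.range K, (2*(n:ℝ≥0∞)+1) * a n
          = ∑ n ∈ Finset.range K, ((2*n+1 : ℕ) : ℝ≥0∞) :=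
            Finset.sum_congr rfl (fun n hn => by
              rw [hone n (Finset.mem_range.mp hn), mul_one]; push_cast; ring)
        _ = ((∑ n ∈ Finset.range K, (2*n+1) : ℕ) : ℝ≥0∞) := by rw [Nat.cast_sum]
        _ = (K:ℝ≥0∞)^2 := by rw [aux_sum_odd]; push_cast; ring
    rw [hsum, hsum2]
  · push_neg at h
    have h1 : ∀ n, a n = 1 := fun n => (h01 n).resolve_right (h n)
    have htop : (⊤:ℝ≥0∞) ≤ ∑' n : ℕ, (2*(n:ℝ≥0∞)+1) * a n := by
      rw [← ENNReal.tsum_const_eq_top_of_ne_zero (α := ℕ) (c := (1:ℝ≥0∞)) one_ne_zero]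
      exact ENNReal.tsum_le_tsum fun n => by
        rw [h1 n, mul_one]; exact le_add_self
    exact le_top.trans htop



private lemma aux_key {Ω : Type*} [MeasurableSpace Ω] (P : Measure Ω) [IsProbabilityMeasure P]
    (Y : ℕ → Ω → ℝ)
    (hmeas : ∀ n, Measurable (Y n))
    (hnonneg : ∀ n ω, 0 ≤ Y n ω)
    (hindep : iIndepFun Y P)
    (hident : ∀ n : ℕ, Measure.map (Y (n + 1)) P = Measure.map (Y 1) P)
    (t : ℝ) (F : ℝ≥0∞)
    (hF : F = P {ω | Y 1 ω ≤ t}) :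
    ∀ m n : ℕ, m ≤ n →
      P {ω | ∑ i ∈ Finset.range (n+1), Y i ω ≤ t}
        ≤ P {ω | ∑ i ∈ Finset.range (m+1), Y i ω ≤ t} * F ^ (n - m) := by
  classical
  intro m n hmn
  -- single marginal probabilities
  have hFi : ∀ i : ℕ, P {ω | Y (i+1) ω ≤ t} = F := by
    intro i
    have h1 : P {ω | Y (i+1) ω ≤ t} = Measure.map (Y (i+1)) P (Set.Iic t) := by
      rw [Measure.map_apply (hmeas _) measurableSet_Iic]; rfl
    rw [h1, hident i, Measure.map_apply (hmeas 1) measurableSet_Iic, hF]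
    rfl
  -- the auxiliary events
  set D : ℕ → Set Ω := fun k =>
    {ω | ∑ i ∈ Finset.range (m+1), Y i ω ≤ t} ∩ ⋂ i ∈ Finset.Ioc m k, {ω | Y i ω ≤ t} with hD
  -- measurability of events w.r.t. the sup sigma-algebras
  have hYcomapMeas : ∀ i : ℕ, MeasurableSet[MeasurableSpace.comap (Y i) inferInstance]
      {ω | Y i ω ≤ t} := fun i => ⟨Set.Iic t, measurableSet_Iic, rfl⟩
  have hDmeas : ∀ k : ℕ, m ≤ k →
      MeasurableSet[⨆ i ∈ {i : ℕ | i ≤ k}, MeasurableSpace.comap (Y i) inferInstance] (D k) := by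
    intro k hk
    have hYM : ∀ i : ℕ, i ≤ k → Measurable[⨆ i ∈ {i : ℕ | i ≤ k},
        MeasurableSpace.comap (Y i) inferInstance] (Y i) := fun i hi =>
      (measurable_iff_comap_le.mpr le_rfl).mono
        (le_biSup (fun i => MeasurableSpace.comap (Y i) inferInstance) (show i ∈ {i : ℕ | i ≤ k} from hi))
        le_rfl
    refine MeasurableSet.inter ?_ ?_
    · have hSm : Measurable[⨆ i ∈ {i : ℕ | i ≤ k}, MeasurableSpace.comap (Y i) inferInstance]
          (fun ω => ∑ i ∈ Finset.range (m+1), Y i ω) := by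
        apply Finset.measurable_sum
        intro i hi
        exact hYM i (by have := Finset.mem_range.mp hi; omega)
      exact hSm measurableSet_Iic
    · refine MeasurableSet.biInter (Finset.Ioc m k).countable_toSet ?_
      intro i hi
      have hik : i ≤ k := (Finset.mem_Ioc.mp hi).2
      exact hYM i hik measurableSet_Iic
  -- independence of D k and {Y (k+1) ≤ t}
  have hindep' : ∀ k : ℕ, m ≤ k → P (D k ∩ {ω | Y (k+1) ω ≤ t}) = P (D k) * P {ω | Y (k+1) ω ≤ t} := by
    intro k hk
    have hdisj : Disjoint {i : ℕ | i ≤ k} ({k+1} : Set ℕ) := by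
      simp [Set.disjoint_singleton_right]
    have hInd : Indep (⨆ i ∈ {i : ℕ | i ≤ k}, MeasurableSpace.comap (Y i) inferInstance)
        (⨆ i ∈ ({k+1} : Set ℕ), MeasurableSpace.comap (Y i) inferInstance) P :=
      indep_iSup_of_disjoint (fun i => (hmeas i).comap_le) hindep hdisj
    rw [iSup_singleton] at hInd
    exact (hInd.indepSet_of_measurableSet (hDmeas k hk) (hYcomapMeas (k+1))).measure_inter_eq_mul
  -- compute P (D k) by induction
  have hDval : ∀ k : ℕ, m ≤ k → P (D k) = P {ω | ∑ i ∈ Finset.range (m+1), Y i ω ≤ t} * F ^ (k - m) := by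
    intro k hk
    induction k with
    | zero =>
      have hm : m = 0 := Nat.le_zero.mp hk
      subst hm
      have h0 : D 0 = {ω | ∑ i ∈ Finset.range (0+1), Y i ω ≤ t} := by
        rw [hD]; simp only [Finset.Ioc_self]; simp
      rw [h0]; simp
    | succ j ih =>
      rcases Nat.lt_or_ge m (j+1) with hlt | hge
      · have hmj : m ≤ j := Nat.lt_succ_iff.mp hlt
        have hins : Finset.Ioc m (j+1) = insert (j+1) (Finset.Ioc m j) := by
          rw [Finset.insert_eq, Finset.union_comm, ← Nat.Ioc_succ_singleton,
            Finset.Ioc_union_Ioc_eq_Ioc hmj (Nat.le_succ j)]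
        have hstep : D (j+1) = D j ∩ {ω | Y (j+1) ω ≤ t} := by
          rw [hD]
          simp only
          rw [hins, Finset.set_biInter_insert,
            Set.inter_comm {ω | Y (j+1) ω ≤ t} (⋂ i ∈ Finset.Ioc m j, {ω | Y i ω ≤ t}),
            ← Set.inter_assoc]
        rw [hstep, hindep' j hmj, ih hmj, hFi j, Nat.succ_sub hmj, pow_succ, mul_assoc]
      · have : m = j + 1 := le_antisymm hk hge
        subst this
        have h0 : D (j+1) = {ω | ∑ i ∈ Finset.range (j+1+1), Y i ω ≤ t} := by
          rw [hD]; simp only [Finset.Ioc_self]; simp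
        rw [h0]; simp
  -- the inclusion
  have hsub : {ω | ∑ i ∈ Finset.range (n+1), Y i ω ≤ t} ⊆ D n := by
    intro ω hω
    simp only [Set.mem_setOf_eq] at hω
    constructor
    · have : ∑ i ∈ Finset.range (m+1), Y i ω ≤ ∑ i ∈ Finset.range (n+1), Y i ω :=
        Finset.sum_le_sum_of_subset_of_nonneg
          (Finset.range_subset_range.mpr (by omega)) (fun i _ _ => hnonneg i ω)
      exact le_trans this hω
    · refine Set.mem_biInter fun i hi => ?_
      have hin : i ∈ Finset.range (n+1) := Finset.mem_range.mpr (by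
        have := (Finset.mem_Ioc.mp hi).2; omega)
      have : Y i ω ≤ ∑ j ∈ Finset.range (n+1), Y j ω :=
        Finset.single_le_sum (fun j _ => hnonneg j ω) hin
      exact le_trans this hω
  calc P {ω | ∑ i ∈ Finset.range (n+1), Y i ω ≤ t} ≤ P (D n) := measure_mono hsub
    _ = _ := hDval n hmn



/-- Renewal lemma, second part:
`E[N_t²] - E[N_t] ≤ 2 F(t) E[N_t]/(1-F(t)) ≤ 2 F(t) G(t)/(1-F(t))²`. -/
theorem renewal_second_moment_bounds
    {Ω : Type*} [MeasurableSpace Ω] (P : Measure Ω) [IsProbabilityMeasure P]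
    (Y : ℕ → Ω → ℝ)
    (hmeas : ∀ n, Measurable (Y n))
    (hnonneg : ∀ n ω, 0 ≤ Y n ω)
    (hindep : iIndepFun Y P)
    (hident : ∀ n : ℕ, Measure.map (Y (n + 1)) P = Measure.map (Y 1) P)
    (t : ℝ)
    (G F : ℝ≥0∞)
    (hG : G = P {ω | Y 0 ω ≤ t})
    (hF : F = P {ω | Y 1 ω ≤ t})
    (hFlt : F < 1)
    (N : Ω → ℝ≥0∞)
    (hN : ∀ ω, N ω = ∑' n : ℕ,
      if (∑ i ∈ Finset.range (n + 1), Y i ω) ≤ t then (1 : ℝ≥0∞) else 0) :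
    (∫⁻ ω, (N ω) ^ 2 ∂P) - ∫⁻ ω, N ω ∂P
      ≤ 2 * F * (∫⁻ ω, N ω ∂P) / (1 - F) ∧
    2 * F * (∫⁻ ω, N ω ∂P) / (1 - F) ≤ 2 * F * G / (1 - F) ^ 2 := by
  classical
  set p : ℕ → ℝ≥0∞ := fun n => P {ω | ∑ i ∈ Finset.range (n+1), Y i ω ≤ t} with hp
  have hsetmeas : ∀ n : ℕ, MeasurableSet {ω | ∑ i ∈ Finset.range (n+1), Y i ω ≤ t} := by
    intro n
    exact measurableSet_le (Finset.measurable_sum _ (fun i _ => hmeas i)) measurable_const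
  have hkey : ∀ m n : ℕ, m ≤ n → p n ≤ p m * F ^ (n - m) :=
    aux_key P Y hmeas hnonneg hindep hident t F hF
  have hp0 : p 0 = G := by
    have hset : {ω | ∑ i ∈ Finset.range (0+1), Y i ω ≤ t} = {ω | Y 0 ω ≤ t} := by
      ext ω; simp [Finset.sum_range_one]
    show P {ω | ∑ i ∈ Finset.range (0+1), Y i ω ≤ t} = G
    rw [hset, hG]
  -- integral of N
  have hNint : ∫⁻ ω, N ω ∂P = ∑' n, p n := by
    calc ∫⁻ ω, N ω ∂P
        = ∫⁻ ω, ∑' n : ℕ, Set.indicator {ω' | ∑ i ∈ Finset.range (n+1), Y i ω' ≤ t}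
            (fun _ => (1:ℝ≥0∞)) ω ∂P := by
          refine lintegral_congr fun ω => ?_
          rw [hN ω]
          exact tsum_congr fun n => by rw [Set.indicator_apply]; rfl
      _ = ∑' n : ℕ, ∫⁻ ω, Set.indicator {ω' | ∑ i ∈ Finset.range (n+1), Y i ω' ≤ t}
            (fun _ => (1:ℝ≥0∞)) ω ∂P :=
          lintegral_tsum fun n => (measurable_one.indicator (hsetmeas n)).aemeasurable
      _ = ∑' n, p n := by
          refine tsum_congr fun n => ?_
          rw [lintegral_indicator (hsetmeas n) _]
          simp [hp]
  -- pointwise bound on N²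
  have hptsq : ∀ ω, N ω ^ 2 ≤ ∑' n : ℕ, (2*(n:ℝ≥0∞)+1) *
      Set.indicator {ω' | ∑ i ∈ Finset.range (n+1), Y i ω' ≤ t} (fun _ => (1:ℝ≥0∞)) ω := by
    intro ω
    have hNω : N ω = ∑' n : ℕ, Set.indicator {ω' | ∑ i ∈ Finset.range (n+1), Y i ω' ≤ t}
        (fun _ => (1:ℝ≥0∞)) ω := by
      rw [hN ω]; exact tsum_congr fun n => by rw [Set.indicator_apply]; rfl
    rw [hNω]
    refine aux_sq_le _ (fun n => ?_) (fun m n hmn => ?_)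
    · by_cases h : ω ∈ {ω' | ∑ i ∈ Finset.range (n+1), Y i ω' ≤ t}
      · left; simp [Set.indicator_of_mem h]
      · right; simp [Set.indicator_of_notMem h]
    · by_cases h : ω ∈ {ω' | ∑ i ∈ Finset.range (n+1), Y i ω' ≤ t}
      · have hm : ω ∈ {ω' | ∑ i ∈ Finset.range (m+1), Y i ω' ≤ t} := by
          simp only [Set.mem_setOf_eq] at h ⊢
          refine le_trans ?_ h
          exact Finset.sum_le_sum_of_subset_of_nonneg
            (Finset.range_subset_range.mpr (by omega)) (fun i _ _ => hnonneg i ω)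
        simp [Set.indicator_of_mem h, Set.indicator_of_mem hm]
      · simp [Set.indicator_of_notMem h]
  -- integral bound on N²
  have hN2 : ∫⁻ ω, N ω ^ 2 ∂P ≤ ∑' n : ℕ, (2*(n:ℝ≥0∞)+1) * p n := by
    calc ∫⁻ ω, N ω ^ 2 ∂P
        ≤ ∫⁻ ω, ∑' n : ℕ, (2*(n:ℝ≥0∞)+1) *
            Set.indicator {ω' | ∑ i ∈ Finset.range (n+1), Y i ω' ≤ t} (fun _ => (1:ℝ≥0∞)) ω ∂P :=
          lintegral_mono hptsq
      _ = ∑' n : ℕ, ∫⁻ ω, (2*(n:ℝ≥0∞)+1) *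
            Set.indicator {ω' | ∑ i ∈ Finset.range (n+1), Y i ω' ≤ t} (fun _ => (1:ℝ≥0∞)) ω ∂P :=
          lintegral_tsum fun n =>
            ((measurable_one.indicator (hsetmeas n)).const_mul _).aemeasurable
      _ = ∑' n : ℕ, (2*(n:ℝ≥0∞)+1) * p n := by
          refine tsum_congr fun n => ?_
          rw [lintegral_const_mul _ ((measurable_const :
              Measurable fun _ : Ω => (1:ℝ≥0∞)).indicator (hsetmeas n)),
            lintegral_indicator (hsetmeas n) _]
          simp [hp]
  -- sum of p bounded by G/(1-F)
  have hpsum : ∑' n, p n ≤ G * (1 - F)⁻¹ := by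
    calc ∑' n, p n ≤ ∑' n : ℕ, G * F ^ n := by
          refine ENNReal.tsum_le_tsum fun n => ?_
          have := hkey 0 n (Nat.zero_le n)
          rwa [hp0, Nat.sub_zero] at this
      _ = G * (1 - F)⁻¹ := by rw [ENNReal.tsum_mul_left, ENNReal.tsum_geometric]
  have h1F : (1 : ℝ≥0∞) - F ≠ 0 := by
    simp only [ne_eq, tsub_eq_zero_iff_le, not_le]
    exact hFlt
  have hpfin : ∑' n, p n ≠ ⊤ := by
    refine ne_top_of_le_ne_top ?_ hpsum
    exact ENNReal.mul_ne_top (ne_top_of_le_ne_top ENNReal.one_ne_top (hG ▸ prob_le_one))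
      (ENNReal.inv_ne_top.mpr h1F)
  -- sum n * p n bound
  have hnp : ∑' n : ℕ, (n:ℝ≥0∞) * p n ≤ (∑' n, p n) * (F * (1-F)⁻¹) := by
    have step1 : ∀ n : ℕ, (n:ℝ≥0∞) * p n = ∑' m : ℕ, if m < n then p n else 0 := by
      intro n
      rw [tsum_eq_sum (s := Finset.range n) (by
        intro m hm
        rw [if_neg (by simpa using hm)])]
      rw [Finset.sum_congr rfl (fun m hm => if_pos (Finset.mem_range.mp hm))]
      rw [Finset.sum_const, Finset.card_range, nsmul_eq_mul]
    calc ∑' n : ℕ, (n:ℝ≥0∞) * p n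
        = ∑' n : ℕ, ∑' m : ℕ, if m < n then p n else 0 := tsum_congr step1
      _ = ∑' m : ℕ, ∑' n : ℕ, if m < n then p n else 0 := ENNReal.tsum_comm
      _ ≤ ∑' m : ℕ, ∑' n : ℕ, if m < n then p m * F^(n-m) else 0 := by
          refine ENNReal.tsum_le_tsum fun m => ENNReal.tsum_le_tsum fun n => ?_
          split_ifs with h
          · exact hkey m n h.le
          · exact le_rfl
      _ = ∑' m : ℕ, p m * ∑' n : ℕ, (if m < n then F^(n-m) else 0) := by
          refine tsum_congr fun m => ?_
          rw [← ENNReal.tsum_mul_left]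
          exact tsum_congr fun n => by split_ifs <;> simp
      _ = ∑' m : ℕ, p m * (F * (1-F)⁻¹) := by
          refine tsum_congr fun m => ?_
          congr 1
          have hinj : Function.Injective (fun k : ℕ => (m+1)+k) := fun a b hab => by
            simp only [] at hab; omega
          have hsupp : Function.support (fun n : ℕ => if m < n then F^(n-m) else (0:ℝ≥0∞))
              ⊆ Set.range (fun k : ℕ => (m+1)+k) := by
            intro n hn
            by_cases h : m < n
            · exact ⟨n - (m+1), show (m+1)+(n-(m+1)) = n by omega⟩
            · simp only [Function.mem_support, if_neg h, ne_eq, not_true_eq_false] at hn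
          rw [← hinj.tsum_eq hsupp]
          have heq : ∀ k : ℕ, (if m < (m+1)+k then F^(((m+1)+k)-m) else (0:ℝ≥0∞)) = F^(k+1) := by
            intro k
            rw [if_pos (by omega)]
            congr 1
            omega
          rw [tsum_congr heq, ENNReal.tsum_geometric_add_one]
      _ = (∑' n, p n) * (F * (1-F)⁻¹) := ENNReal.tsum_mul_right
  -- final assembly
  have hsplit : ∑' n : ℕ, (2*(n:ℝ≥0∞)+1) * p n
      = 2 * ∑' n : ℕ, (n:ℝ≥0∞) * p n + ∑' n, p n := by
    rw [← ENNReal.tsum_mul_left, ← ENNReal.tsum_add]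
    refine tsum_congr fun n => ?_
    ring
  constructor
  · rw [hNint]
    calc (∫⁻ ω, N ω ^ 2 ∂P) - ∑' n, p n
        ≤ (∑' n : ℕ, (2*(n:ℝ≥0∞)+1) * p n) - ∑' n, p n := tsub_le_tsub_right hN2 _
      _ = 2 * ∑' n : ℕ, (n:ℝ≥0∞) * p n := by
          rw [hsplit, ENNReal.add_sub_cancel_right hpfin]
      _ ≤ 2 * ((∑' n, p n) * (F * (1-F)⁻¹)) := by
          exact mul_le_mul_right hnp 2
      _ = 2 * F * (∑' n, p n) / (1 - F) := by
          rw [div_eq_mul_inv]; ring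
  · rw [hNint]
    calc 2 * F * (∑' n, p n) / (1 - F)
        ≤ 2 * F * (G * (1-F)⁻¹) / (1 - F) := by
          gcongr
      _ = 2 * F * G / (1 - F) ^ 2 := by
          rw [div_eq_mul_inv, div_eq_mul_inv, ENNReal.inv_pow]
          ring
end

section
/- The metric d₁' on finite point configurations is subadditive with respect to superposition: for configurations ξ₁, ξ₂, η₁, η₂ on a metric space with metric bounded by 1, d₁'(ξ₁ + η₁, ξ₂ + η₂) ≤ d₁'(ξ₁, ξ₂) + d₁'(η₁, η₂). -/
open scoped BigOperators

variable {Γ : Type*} [MetricSpace Γ]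

private lemma exists_le_card_eq' {α : Type*} (s : Multiset α) (k : ℕ)
    (h : k ≤ Multiset.card s) : ∃ t ≤ s, Multiset.card t = k := by
  refine ⟨(s.toList.take k : List α), ?_, ?_⟩
  · conv_rhs => rw [← s.coe_toList]
    exact Multiset.coe_le.mpr (s.toList.take_sublist k).subperm
  · simp [List.length_take]
    omega

private lemma exists_matching (hd₀ : ∀ a b : Γ, dist a b ≤ 1)
    (ξ η : Multiset Γ) (k : ℕ) (hk₁ : k ≤ Multiset.card ξ) (hk₂ : k ≤ Multiset.card η) :
    ∃ ζ : Multiset (Γ × Γ), ζ.map Prod.fst ≤ ξ ∧ ζ.map Prod.snd ≤ η ∧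
      Multiset.card ζ = k ∧ (ζ.map fun p => dist p.1 p.2).sum ≤ (k : ℝ) := by
  obtain ⟨t₁, ht₁, hc₁⟩ := exists_le_card_eq' ξ k hk₁
  obtain ⟨t₂, ht₂, hc₂⟩ := exists_le_card_eq' η k hk₂
  have hl₁ : t₁.toList.length = k := by rw [Multiset.length_toList, hc₁]
  have hl₂ : t₂.toList.length = k := by rw [Multiset.length_toList, hc₂]
  have hlen : t₁.toList.length = t₂.toList.length := by rw [hl₁, hl₂]
  refine ⟨((t₁.toList.zip t₂.toList : List (Γ × Γ)) : Multiset (Γ × Γ)), ?_, ?_, ?_, ?_⟩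
  · rw [Multiset.map_coe, List.map_fst_zip hlen.le]
    rw [Multiset.coe_toList]
    exact ht₁
  · rw [Multiset.map_coe, List.map_snd_zip hlen.ge]
    rw [Multiset.coe_toList]
    exact ht₂
  · simp [List.length_zip, hl₁, hl₂]
  · calc ((((t₁.toList.zip t₂.toList : List (Γ × Γ)) : Multiset (Γ × Γ)).map
        fun p => dist p.1 p.2)).sum
        ≤ (Multiset.card (((t₁.toList.zip t₂.toList : List (Γ × Γ)) :
            Multiset (Γ × Γ)).map fun p => dist p.1 p.2)) • (1 : ℝ) :=
          Multiset.sum_le_card_nsmul _ _ (by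
            intro x hx
            obtain ⟨p, _, rfl⟩ := Multiset.mem_map.mp hx
            exact hd₀ _ _)
      _ ≤ (k : ℝ) := by
          simp [List.length_zip, hl₁, hl₂]

private lemma min_eq_half' (x y : ℝ) : min x y = (x + y - |x - y|) / 2 := by
  rcases le_total x y with h | h
  · rw [min_eq_left h, abs_of_nonpos (by linarith)]; ring
  · rw [min_eq_right h, abs_of_nonneg (by linarith)]; ring

/-- The `d₁'` metric between two finite point configurations (finite multisets
of points): the minimal total matching cost, pairing `min(|ξ|,|η|)` points of
one configuration with distinct points of the other via distances `d₀`, plus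
the difference of the cardinalities. -/
noncomputable def d1' (ξ η : Multiset Γ) : ℝ :=
  sInf {c : ℝ | ∃ ζ : Multiset (Γ × Γ),
    ζ.map Prod.fst ≤ ξ ∧ ζ.map Prod.snd ≤ η ∧
    Multiset.card ζ = min (Multiset.card ξ) (Multiset.card η) ∧
    c = (ζ.map fun p => dist p.1 p.2).sum
        + |(Multiset.card ξ : ℝ) - (Multiset.card η : ℝ)|}

private lemma d1'_set_nonempty (hd₀ : ∀ a b : Γ, dist a b ≤ 1) (ξ η : Multiset Γ) :
    {c : ℝ | ∃ ζ : Multiset (Γ × Γ),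
      ζ.map Prod.fst ≤ ξ ∧ ζ.map Prod.snd ≤ η ∧
      Multiset.card ζ = min (Multiset.card ξ) (Multiset.card η) ∧
      c = (ζ.map fun p => dist p.1 p.2).sum
          + |(Multiset.card ξ : ℝ) - (Multiset.card η : ℝ)|}.Nonempty := by
  obtain ⟨ζ, h1, h2, h3, _⟩ := exists_matching hd₀ ξ η
    (min (Multiset.card ξ) (Multiset.card η)) (min_le_left _ _) (min_le_right _ _)
  exact ⟨_, ζ, h1, h2, h3, rfl⟩

private lemma d1'_set_bddBelow (ξ η : Multiset Γ) :
    BddBelow {c : ℝ | ∃ ζ : Multiset (Γ × Γ),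
      ζ.map Prod.fst ≤ ξ ∧ ζ.map Prod.snd ≤ η ∧
      Multiset.card ζ = min (Multiset.card ξ) (Multiset.card η) ∧
      c = (ζ.map fun p => dist p.1 p.2).sum
          + |(Multiset.card ξ : ℝ) - (Multiset.card η : ℝ)|} := by
  refine ⟨0, ?_⟩
  rintro c ⟨ζ, -, -, -, rfl⟩
  refine add_nonneg (Multiset.sum_nonneg ?_) (abs_nonneg _)
  intro x hx
  obtain ⟨p, -, rfl⟩ := Multiset.mem_map.mp hx
  exact dist_nonneg

/-- `d₁'` is subadditive under superposition of configurations: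
`d₁'(ξ₁ + η₁, ξ₂ + η₂) ≤ d₁'(ξ₁, ξ₂) + d₁'(η₁, η₂)`. -/
theorem d1'_superposition_subadditive
    (hd₀ : ∀ a b : Γ, dist a b ≤ 1)
    (ξ₁ ξ₂ η₁ η₂ : Multiset Γ) :
    d1' (ξ₁ + η₁) (ξ₂ + η₂) ≤ d1' ξ₁ ξ₂ + d1' η₁ η₂ := by
  have key : ∀ c₁ ∈ {c : ℝ | ∃ ζ : Multiset (Γ × Γ),
      ζ.map Prod.fst ≤ ξ₁ ∧ ζ.map Prod.snd ≤ ξ₂ ∧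
      Multiset.card ζ = min (Multiset.card ξ₁) (Multiset.card ξ₂) ∧
      c = (ζ.map fun p => dist p.1 p.2).sum
          + |(Multiset.card ξ₁ : ℝ) - (Multiset.card ξ₂ : ℝ)|},
      ∀ c₂ ∈ {c : ℝ | ∃ ζ : Multiset (Γ × Γ),
      ζ.map Prod.fst ≤ η₁ ∧ ζ.map Prod.snd ≤ η₂ ∧
      Multiset.card ζ = min (Multiset.card η₁) (Multiset.card η₂) ∧
      c = (ζ.map fun p => dist p.1 p.2).sum
          + |(Multiset.card η₁ : ℝ) - (Multiset.card η₂ : ℝ)|},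
      d1' (ξ₁ + η₁) (ξ₂ + η₂) ≤ c₁ + c₂ := by
    classical
    rintro c₁ ⟨ζ₁, h1f, h1s, h1c, rfl⟩ c₂ ⟨ζ₂, h2f, h2s, h2c, rfl⟩
    -- abbreviations for cardinalities
    set n₁ := Multiset.card ξ₁ with hn₁
    set n₂ := Multiset.card ξ₂ with hn₂
    set m₁ := Multiset.card η₁ with hm₁
    set m₂ := Multiset.card η₂ with hm₂
    have hminsum : min n₁ n₂ + min m₁ m₂ ≤ min (n₁ + m₁) (n₂ + m₂) := by omega
    set k : ℕ := min (n₁ + m₁) (n₂ + m₂) - (min n₁ n₂ + min m₁ m₂) with hk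
    -- leftovers
    have hX₁ : ζ₁.map Prod.fst + ζ₂.map Prod.fst ≤ ξ₁ + η₁ := add_le_add h1f h2f
    have hX₂ : ζ₁.map Prod.snd + ζ₂.map Prod.snd ≤ ξ₂ + η₂ := add_le_add h1s h2s
    have hcard₁ : Multiset.card ((ξ₁ + η₁) - (ζ₁.map Prod.fst + ζ₂.map Prod.fst))
        = (n₁ + m₁) - (min n₁ n₂ + min m₁ m₂) := by
      rw [Multiset.card_sub hX₁]
      simp [h1c, h2c, hn₁, hn₂, hm₁, hm₂]
    have hcard₂ : Multiset.card ((ξ₂ + η₂) - (ζ₁.map Prod.snd + ζ₂.map Prod.snd))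
        = (n₂ + m₂) - (min n₁ n₂ + min m₁ m₂) := by
      rw [Multiset.card_sub hX₂]
      simp [h1c, h2c, hn₁, hn₂, hm₁, hm₂]
    obtain ⟨ζₑ, hef, hes, hec, hesum⟩ := exists_matching hd₀
      ((ξ₁ + η₁) - (ζ₁.map Prod.fst + ζ₂.map Prod.fst))
      ((ξ₂ + η₂) - (ζ₁.map Prod.snd + ζ₂.map Prod.snd)) k
      (by rw [hcard₁]; omega) (by rw [hcard₂]; omega)
    set ζ : Multiset (Γ × Γ) := ζ₁ + ζ₂ + ζₑ with hζ
    have hfst : ζ.map Prod.fst ≤ ξ₁ + η₁ := by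
      rw [hζ, Multiset.map_add, Multiset.map_add]
      exact (le_tsub_iff_left hX₁).mp hef
    have hsnd : ζ.map Prod.snd ≤ ξ₂ + η₂ := by
      rw [hζ, Multiset.map_add, Multiset.map_add]
      exact (le_tsub_iff_left hX₂).mp hes
    have hcard : Multiset.card ζ
        = min (Multiset.card (ξ₁ + η₁)) (Multiset.card (ξ₂ + η₂)) := by
      simp only [hζ, Multiset.card_add, Multiset.map_add, h1c, h2c, hec]
      simp [hn₁, hn₂, hm₁, hm₂]
      omega
    have hmem : ((ζ.map fun p => dist p.1 p.2).sum
        + |(Multiset.card (ξ₁ + η₁) : ℝ) - (Multiset.card (ξ₂ + η₂) : ℝ)|) ∈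
        {c : ℝ | ∃ ζ : Multiset (Γ × Γ),
          ζ.map Prod.fst ≤ ξ₁ + η₁ ∧ ζ.map Prod.snd ≤ ξ₂ + η₂ ∧
          Multiset.card ζ = min (Multiset.card (ξ₁ + η₁)) (Multiset.card (ξ₂ + η₂)) ∧
          c = (ζ.map fun p => dist p.1 p.2).sum
              + |(Multiset.card (ξ₁ + η₁) : ℝ) - (Multiset.card (ξ₂ + η₂) : ℝ)|} :=
      ⟨ζ, hfst, hsnd, hcard, rfl⟩
    refine le_trans (csInf_le (d1'_set_bddBelow _ _) hmem) ?_
    -- now the cost estimate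
    have hsum : (ζ.map fun p => dist p.1 p.2).sum
        = (ζ₁.map fun p => dist p.1 p.2).sum + (ζ₂.map fun p => dist p.1 p.2).sum
          + (ζₑ.map fun p => dist p.1 p.2).sum := by
      simp [hζ, Multiset.map_add, Multiset.sum_add]
    have hkcast : (k : ℝ) = min ((n₁ : ℝ) + m₁) ((n₂ : ℝ) + m₂)
        - (min (n₁ : ℝ) n₂ + min (m₁ : ℝ) m₂) := by
      rw [hk, Nat.cast_sub hminsum]
      push_cast [Nat.cast_min]
      ring
    have habs : |((n₁ : ℝ) + m₁) - ((n₂ : ℝ) + m₂)| ≤ |(n₁ : ℝ) - n₂| + |(m₁ : ℝ) - m₂| := by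
      have := abs_add_le ((n₁ : ℝ) - n₂) ((m₁ : ℝ) - m₂)
      have h : (n₁ : ℝ) + m₁ - ((n₂ : ℝ) + m₂) = ((n₁ : ℝ) - n₂) + ((m₁ : ℝ) - m₂) := by ring
      rw [h]; exact this
    have hkey : (k : ℝ) + |(Multiset.card (ξ₁ + η₁) : ℝ) - (Multiset.card (ξ₂ + η₂) : ℝ)|
        ≤ |(n₁ : ℝ) - n₂| + |(m₁ : ℝ) - m₂| := by
      have hN : (Multiset.card (ξ₁ + η₁) : ℝ) = (n₁ : ℝ) + m₁ := by
        simp [hn₁, hm₁]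
      have hN' : (Multiset.card (ξ₂ + η₂) : ℝ) = (n₂ : ℝ) + m₂ := by
        simp [hn₂, hm₂]
      rw [hN, hN', hkcast, min_eq_half' ((n₁:ℝ)+m₁), min_eq_half' (n₁:ℝ),
        min_eq_half' (m₁:ℝ)]
      linarith [habs]
    rw [hsum]
    linarith [hesum, hkey]
  have hne₁ := d1'_set_nonempty hd₀ ξ₁ ξ₂
  have hne₂ := d1'_set_nonempty hd₀ η₁ η₂
  have h₁ : d1' (ξ₁ + η₁) (ξ₂ + η₂) - d1' η₁ η₂ ≤ d1' ξ₁ ξ₂ := by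
    refine le_csInf hne₁ fun c₁ hc₁ => ?_
    have h₂ : d1' (ξ₁ + η₁) (ξ₂ + η₂) - c₁ ≤ d1' η₁ η₂ := by
      refine le_csInf hne₂ fun c₂ hc₂ => ?_
      have := key c₁ hc₁ c₂ hc₂
      linarith
    linarith
  linarith
end

section
/- Let I₁,...,I_n be independent Bernoulli random variables with P(I_i = 1) = p_i, and let λ = ∑ p_i. Then the total variation distance between the law of W = ∑ I_i and the Poisson distribution with mean λ satisfies d_tv(L(W), Po(λ)) ≤ ((1 - e^{-λ})/λ) ∑_{i=1}^n p_i². -/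
open MeasureTheory ProbabilityTheory Classical

noncomputable def pp (lam : ℝ) (k : ℕ) : ℝ := Real.exp (-lam) * lam ^ k / (k.factorial : ℝ)

lemma pp_pos {lam : ℝ} (h : 0 < lam) (k : ℕ) : 0 < pp lam k := by
  unfold pp; positivity

lemma pp_succ (lam : ℝ) (k : ℕ) : (k + 1 : ℝ) * pp lam (k+1) = lam * pp lam k := by
  unfold pp
  rw [Nat.factorial_succ]
  push_cast
  field_simp
  ring

lemma summable_pp (lam : ℝ) : Summable (pp lam) := by
  unfold pp
  simpa [div_eq_mul_inv, mul_assoc, mul_div_assoc] using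
    (Real.summable_pow_div_factorial lam).mul_left (Real.exp (-lam))

lemma tsum_pp (lam : ℝ) : ∑' k, pp lam k = 1 := by
  unfold pp
  have h1 : ∑' k : ℕ, lam ^ k / (k.factorial : ℝ) = Real.exp lam := by
    rw [Real.exp_eq_exp_ℝ, NormedSpace.exp_eq_tsum_div]
  calc ∑' k : ℕ, Real.exp (-lam) * lam ^ k / (k.factorial : ℝ)
      = ∑' k : ℕ, Real.exp (-lam) * (lam ^ k / (k.factorial : ℝ)) := by
        congr 1; funext k; ring
    _ = Real.exp (-lam) * Real.exp lam := by rw [tsum_mul_left, h1]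
    _ = 1 := by rw [← Real.exp_add]; simp

noncomputable def indA (A : Set ℕ) (k : ℕ) : ℝ := if k ∈ A then 1 else 0

noncomputable def FF (lam : ℝ) (j : ℕ) : ℝ := ∑ k ∈ Finset.range j, pp lam k
noncomputable def aA (lam : ℝ) (A : Set ℕ) (j : ℕ) : ℝ :=
  ∑ k ∈ Finset.range j, indA A k * pp lam k
noncomputable def muA (lam : ℝ) (A : Set ℕ) : ℝ := ∑' k, indA A k * pp lam k

noncomputable def ff (lam : ℝ) (A : Set ℕ) : ℕ → ℝ
  | 0 => 0
  | (j+1) => (aA lam A (j+1) - muA lam A * FF lam (j+1)) / (lam * pp lam j)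

lemma ff_zero (lam : ℝ) (A : Set ℕ) : ff lam A 0 = 0 := rfl
lemma ff_succ (lam : ℝ) (A : Set ℕ) (j : ℕ) :
    ff lam A (j+1) = (aA lam A (j+1) - muA lam A * FF lam (j+1)) / (lam * pp lam j) := rfl

lemma stein {lam : ℝ} (h : 0 < lam) (A : Set ℕ) (j : ℕ) :
    lam * ff lam A (j+1) - (j : ℝ) * ff lam A j = indA A j - muA lam A := by
  have hl := h.ne'
  cases j with
  | zero =>
      have h0 := (pp_pos h 0).ne'
      rw [show (0:ℕ)+1 = 1 from rfl] at *
      rw [show ff lam A 1 = (aA lam A 1 - muA lam A * FF lam 1) / (lam * pp lam 0) from rfl]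
      simp only [Nat.cast_zero, zero_mul, sub_zero]
      rw [aA, FF]
      simp only [Finset.sum_range_one]
      field_simp
  | succ m =>
      have h0 := (pp_pos h m).ne'
      have h1 := (pp_pos h (m+1)).ne'
      have key : pp lam (m+1) = lam * pp lam m / (m + 1 : ℝ) := by
        rw [← pp_succ lam m]; field_simp
      have hm1 : (m + 1 : ℝ) ≠ 0 := by positivity
      rw [ff_succ, ff_succ]
      rw [show aA lam A (m+2) = aA lam A (m+1) + indA A (m+1) * pp lam (m+1) from
          Finset.sum_range_succ _ _,
        show FF lam (m+2) = FF lam (m+1) + pp lam (m+1) from Finset.sum_range_succ _ _]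
      rw [key]
      push_cast
      field_simp
      ring

lemma pp_zero (lam : ℝ) : pp lam 0 = Real.exp (-lam) := by simp [pp]

lemma indA_nonneg (A : Set ℕ) (k : ℕ) : 0 ≤ indA A k := by
  unfold indA; split <;> norm_num

lemma indA_le_one (A : Set ℕ) (k : ℕ) : indA A k ≤ 1 := by
  unfold indA; split <;> norm_num

lemma cross {lam : ℝ} (h : 0 < lam) {k m : ℕ} (hkm : k ≤ m) :
    pp lam k * pp lam (m+1) ≤ pp lam (k+1) * pp lam m := by
  have hk : (0:ℝ) < (k:ℝ) + 1 := by positivity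
  have hm : (0:ℝ) < (m:ℝ) + 1 := by positivity
  have e1 : pp lam k * pp lam (m+1) = lam * pp lam m * pp lam k / ((m:ℝ)+1) := by
    rw [← pp_succ lam m]; field_simp
  have e2 : pp lam (k+1) * pp lam m = lam * pp lam m * pp lam k / ((k:ℝ)+1) := by
    rw [eq_div_iff hk.ne']
    have e : pp lam (k+1) * pp lam m * ((k:ℝ)+1) = ((k:ℝ)+1) * pp lam (k+1) * pp lam m := by ring
    rw [e, pp_succ]; ring
  rw [e1, e2]
  have hle : (k:ℝ) + 1 ≤ (m:ℝ) + 1 := by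
    have : (k:ℝ) ≤ (m:ℝ) := Nat.cast_le.mpr hkm
    linarith
  exact div_le_div_of_nonneg_left
    (le_of_lt (mul_pos (mul_pos h (pp_pos h m)) (pp_pos h k))) hk hle

lemma I1 {lam : ℝ} (h : 0 < lam) (m : ℕ) :
    FF lam (m+1) * pp lam (m+1) ≤ FF lam (m+2) * pp lam m := by
  unfold FF
  rw [Finset.sum_mul, Finset.sum_mul, show m+2 = (m+1)+1 from rfl,
    Finset.sum_range_succ' (fun k => pp lam k * pp lam m) (m+1)]
  have h1 : ∀ k ∈ Finset.range (m+1), pp lam k * pp lam (m+1) ≤ pp lam (k+1) * pp lam m := by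
    intro k hk
    exact cross h (Nat.lt_succ_iff.mp (Finset.mem_range.mp hk))
  calc ∑ k ∈ Finset.range (m+1), pp lam k * pp lam (m+1)
      ≤ ∑ k ∈ Finset.range (m+1), pp lam (k+1) * pp lam m := Finset.sum_le_sum h1
    _ ≤ ∑ k ∈ Finset.range (m+1), pp lam (k+1) * pp lam m + pp lam 0 * pp lam m := by
        have := mul_pos (pp_pos h 0) (pp_pos h m); linarith

lemma tail_eq {lam : ℝ} (j : ℕ) : 1 - FF lam j = ∑' k, pp lam (k + j) := by
  have := Summable.sum_add_tsum_nat_add j (summable_pp lam)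
  rw [tsum_pp lam] at this
  unfold FF
  linarith

lemma summable_tail (lam : ℝ) (j : ℕ) : Summable (fun k => pp lam (k + j)) :=
  (summable_nat_add_iff j).mpr (summable_pp lam)

lemma I2 {lam : ℝ} (h : 0 < lam) (m : ℕ) :
    (1 - FF lam (m+2)) * pp lam m ≤ (1 - FF lam (m+1)) * pp lam (m+1) := by
  rw [tail_eq (m+2), tail_eq (m+1), ← tsum_mul_right, ← tsum_mul_right]
  apply Summable.tsum_le_tsum _ ((summable_tail lam (m+2)).mul_right _)
    ((summable_tail lam (m+1)).mul_right _)
  intro r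
  have h1 : r + (m + 2) = (r + m + 1) + 1 := by omega
  have h2 : r + (m + 1) = r + m + 1 := by omega
  rw [h1, h2]
  calc pp lam (r + m + 1 + 1) * pp lam m = pp lam m * pp lam ((r + m + 1) + 1) := by ring
    _ ≤ pp lam (m + 1) * pp lam (r + m + 1) := cross h (by omega)
    _ = pp lam (r + m + 1) * pp lam (m+1) := by ring

lemma I3 {lam : ℝ} (h : 0 < lam) (m : ℕ) :
    lam * FF lam (m+1) ≤ ((m:ℝ)+1) * (FF lam (m+2) - pp lam 0) := by
  have e : FF lam (m+2) - pp lam 0 = ∑ k ∈ Finset.range (m+1), pp lam (k+1) := by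
    unfold FF
    rw [Finset.sum_range_succ' (pp lam) (m+1)]
    ring
  rw [e]
  unfold FF
  rw [Finset.mul_sum, Finset.mul_sum]
  apply Finset.sum_le_sum
  intro k hk
  rw [← pp_succ lam k]
  have hkm : (k:ℝ) + 1 ≤ (m:ℝ) + 1 := by
    have : (k:ℝ) ≤ m := Nat.cast_le.mpr (Nat.lt_succ_iff.mp (Finset.mem_range.mp hk))
    linarith
  exact mul_le_mul_of_nonneg_right hkm (pp_pos h (k+1)).le

lemma summable_ind {lam : ℝ} (h : 0 < lam) (A : Set ℕ) :
    Summable (fun k => indA A k * pp lam k) := by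
  apply Summable.of_nonneg_of_le (fun k => mul_nonneg (indA_nonneg A k) (pp_pos h k).le)
    (fun k => ?_) (summable_pp lam)
  calc indA A k * pp lam k ≤ 1 * pp lam k :=
        mul_le_mul_of_nonneg_right (indA_le_one A k) (pp_pos h k).le
    _ = pp lam k := one_mul _

lemma aA_le_muA {lam : ℝ} (h : 0 < lam) (A : Set ℕ) (j : ℕ) : aA lam A j ≤ muA lam A :=
  Summable.sum_le_tsum (Finset.range j)
    (fun k _ => mul_nonneg (indA_nonneg A k) (pp_pos h k).le) (summable_ind h A)

lemma aA_nonneg {lam : ℝ} (h : 0 < lam) (A : Set ℕ) (j : ℕ) : 0 ≤ aA lam A j :=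
  Finset.sum_nonneg (fun k _ => mul_nonneg (indA_nonneg A k) (pp_pos h k).le)

lemma muA_compl {lam : ℝ} (h : 0 < lam) (A : Set ℕ) : muA lam Aᶜ = 1 - muA lam A := by
  have hsum : (fun k => indA Aᶜ k * pp lam k) = fun k => pp lam k - indA A k * pp lam k := by
    funext k
    unfold indA
    by_cases hk : k ∈ A <;> simp [hk]
  unfold muA
  rw [hsum, Summable.tsum_sub (summable_pp lam) (summable_ind h A), tsum_pp]

lemma aA_compl (lam : ℝ) (A : Set ℕ) (j : ℕ) : aA lam Aᶜ j = FF lam j - aA lam A j := by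
  unfold aA FF
  rw [← Finset.sum_sub_distrib]
  apply Finset.sum_congr rfl
  intro k _
  unfold indA
  by_cases hk : k ∈ A <;> simp [hk]

lemma ff_compl {lam : ℝ} (h : 0 < lam) (A : Set ℕ) (j : ℕ) :
    ff lam Aᶜ j = - ff lam A j := by
  cases j with
  | zero => simp [ff_zero]
  | succ m =>
      rw [ff_succ, ff_succ, aA_compl, muA_compl h, ← neg_div]
      congr 1
      ring

lemma ff_upper {lam : ℝ} (h : 0 < lam) (A : Set ℕ) (m : ℕ) :
    ff lam A (m+2) - ff lam A (m+1) ≤ (1 - Real.exp (-lam)) / lam := by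
  have hP0 := pp_pos h m
  have hP1 := pp_pos h (m+1)
  have hl := h.ne'
  have h0 := hP0.ne'
  have h1 := hP1.ne'
  have hm1 : (0:ℝ) < (m:ℝ) + 1 := by positivity
  set P0 := pp lam m with hP0def
  set P1 := pp lam (m+1) with hP1def
  set μ := muA lam A with hμ
  have ha2 : aA lam A (m+2) = aA lam A (m+1) + indA A (m+1) * P1 := Finset.sum_range_succ _ _
  have hF2 : FF lam (m+2) = FF lam (m+1) + P1 := Finset.sum_range_succ _ _
  set C := FF lam (m+2) / P1 - FF lam (m+1) / P0 with hC
  have hC0 : 0 ≤ C := by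
    rw [hC, sub_nonneg, div_le_div_iff₀ hP0 hP1]
    exact I1 h m
  have hD : lam * (ff lam A (m+2) - ff lam A (m+1)) =
      aA lam A (m+1) * (1/P1 - 1/P0 - C) + indA A (m+1) * (1 - P1 * C)
        - (μ - aA lam A (m+2)) * C := by
    rw [ff_succ, ff_succ, hC, ha2, hF2, ← hP0def, ← hP1def]
    field_simp
    ring
  have hB1 : 1/P1 - 1/P0 - C ≤ 0 := by
    have h2 : (1 - FF lam (m+2))/P1 ≤ (1 - FF lam (m+1))/P0 := by
      rw [div_le_div_iff₀ hP1 hP0]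
      exact I2 h m
    have e : 1/P1 - 1/P0 - C = (1 - FF lam (m+2))/P1 - (1 - FF lam (m+1))/P0 := by
      rw [hC]; field_simp; ring
    linarith
  have hs : ((m:ℝ)+1) * P1 = lam * P0 := pp_succ lam m
  have hP1e : P1 = lam * P0 / ((m:ℝ)+1) := by
    rw [eq_div_iff hm1.ne']
    linarith
  have hPC : Real.exp (-lam) ≤ P1 * C := by
    have e : P1 * C = FF lam (m+2) - lam * FF lam (m+1) / ((m:ℝ)+1) := by
      rw [hC, hP1e]
      field_simp
    have h3 := I3 h m
    rw [← pp_zero lam, e]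
    have h5 : lam * FF lam (m+1) / ((m:ℝ)+1) ≤ FF lam (m+2) - pp lam 0 := by
      rw [div_le_iff₀ hm1]
      nlinarith
    linarith
  have hexp : Real.exp (-lam) ≤ 1 := by
    have := Real.exp_le_exp.mpr (by linarith : -lam ≤ 0)
    simpa using this
  have hiterm : indA A (m+1) * (1 - P1 * C) ≤ 1 - Real.exp (-lam) := by
    unfold indA
    split
    · rw [one_mul]; linarith
    · rw [zero_mul]; linarith
  have h4 : 0 ≤ (μ - aA lam A (m+2)) * C :=
    mul_nonneg (by linarith [aA_le_muA h A (m+2)]) hC0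
  have t1 : aA lam A (m+1) * (1/P1 - 1/P0 - C) ≤ 0 := by
    rcases mul_nonpos_iff (a := aA lam A (m+1)) (b := 1/P1 - 1/P0 - C) with ⟨_, hmpr⟩
    exact hmpr (Or.inl ⟨aA_nonneg h A (m+1), hB1⟩)
  have hsum : lam * (ff lam A (m+2) - ff lam A (m+1)) ≤ 1 - Real.exp (-lam) := by
    rw [hD]
    clear_value C μ P1 P0
    linarith
  rw [le_div_iff₀ h]
  linarith

lemma ff_abs {lam : ℝ} (h : 0 < lam) (A : Set ℕ) (m : ℕ) :
    |ff lam A (m+2) - ff lam A (m+1)| ≤ (1 - Real.exp (-lam)) / lam := by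
  rw [abs_le]
  constructor
  · have := ff_upper h Aᶜ m
    rw [ff_compl h, ff_compl h] at this
    linarith
  · exact ff_upper h A m

noncomputable def qq {n : ℕ} (p : Fin n → ℝ) (x : Fin n → Bool) : ℝ :=
  ∏ i, (if x i then p i else 1 - p i)

def cnt {n : ℕ} (x : Fin n → Bool) : ℕ := ∑ i, (if x i then 1 else 0)

noncomputable def rr {n : ℕ} (p : Fin n → ℝ) (i : Fin n) (x : Fin n → Bool) : ℝ :=
  ∏ j, (if j = i then 1 else (if x j then p j else 1 - p j))

lemma sum_prod_w {n : ℕ} (w : Fin n → Bool → ℝ) :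
    ∑ x : Fin n → Bool, ∏ i, w i (x i) = ∏ i, (w i true + w i false) := by
  calc ∑ x : Fin n → Bool, ∏ i, w i (x i)
      = ∑ x ∈ Fintype.piFinset (fun _ : Fin n => (Finset.univ : Finset Bool)),
          ∏ i, w i (x i) := by rw [Fintype.piFinset_univ]
    _ = ∏ i, ∑ b ∈ (Finset.univ : Finset Bool), w i b := (Finset.prod_univ_sum _ _).symm
    _ = ∏ i, (w i true + w i false) := by
        apply Finset.prod_congr rfl
        intro i _
        simp

lemma sum_qq {n : ℕ} (p : Fin n → ℝ) : ∑ x : Fin n → Bool, qq p x = 1 := by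
  unfold qq
  exact (sum_prod_w (fun i b => if b then p i else 1 - p i)).trans (by simp)

lemma sum_rr {n : ℕ} (p : Fin n → ℝ) (i : Fin n) :
    ∑ x : Fin n → Bool, rr p i x = 2 := by
  unfold rr
  refine (sum_prod_w (fun j b => if j = i then 1 else (if b then p j else 1 - p j))).trans ?_
  have : ∀ j : Fin n, ((if j = i then (1:ℝ) else if true = true then p j else 1 - p j) +
      (if j = i then 1 else if false = true then p j else 1 - p j)) =
      if j = i then 2 else 1 := by
    intro j
    by_cases hj : j = i <;> simp [hj] <;> norm_num
  rw [Finset.prod_congr rfl (fun j _ => this j)]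
  simp [Finset.prod_ite_eq']

lemma sum_split {n : ℕ} (i : Fin n) (G : (Fin n → Bool) → ℝ) :
    ∑ x : Fin n → Bool, G x
      = ∑ x ∈ Finset.univ.filter (fun x => x i = false),
          (G x + G (Function.update x i true)) := by
  rw [Finset.sum_add_distrib]
  rw [← Finset.sum_filter_add_sum_filter_not Finset.univ (fun x => x i = false) G]
  congr 1
  apply Finset.sum_nbij' (i := fun x => Function.update x i false)
    (j := fun x => Function.update x i true)
  · intro a _
    simp
  · intro a _
    simp
  · intro a ha
    simp only [Finset.mem_filter, Finset.mem_univ, true_and, Bool.not_eq_false] at ha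
    rw [Function.update_idem, ← ha, Function.update_eq_self]
  · intro a ha
    simp only [Finset.mem_filter, Finset.mem_univ, true_and] at ha
    rw [Function.update_idem, ← ha, Function.update_eq_self]
  · intro a ha
    simp only [Finset.mem_filter, Finset.mem_univ, true_and, Bool.not_eq_false] at ha
    rw [Function.update_idem, ← ha, Function.update_eq_self]

lemma rr_erase {n : ℕ} (p : Fin n → ℝ) (i : Fin n) (x : Fin n → Bool) :
    rr p i x = ∏ j ∈ Finset.univ.erase i, (if x j then p j else 1 - p j) := by
  unfold rr
  rw [← Finset.mul_prod_erase Finset.univ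
    (fun j => if j = i then (1:ℝ) else (if x j then p j else 1 - p j)) (Finset.mem_univ i),
    if_pos rfl, one_mul]
  exact Finset.prod_congr rfl (fun j hj => if_neg (Finset.ne_of_mem_erase hj))

lemma qq_split {n : ℕ} (p : Fin n → ℝ) (i : Fin n) (x : Fin n → Bool) :
    qq p x = (if x i then p i else 1 - p i) * rr p i x := by
  rw [rr_erase]
  unfold qq
  rw [← Finset.mul_prod_erase Finset.univ _ (Finset.mem_univ i)]

lemma rr_update {n : ℕ} (p : Fin n → ℝ) (i : Fin n) (x : Fin n → Bool) (b : Bool) :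
    rr p i (Function.update x i b) = rr p i x := by
  unfold rr
  apply Finset.prod_congr rfl
  intro j _
  by_cases hj : j = i
  · simp [hj]
  · rw [if_neg hj, if_neg hj, Function.update_of_ne hj]

lemma rr_nonneg {n : ℕ} {p : Fin n → ℝ} (hp0 : ∀ i, 0 ≤ p i) (hp1 : ∀ i, p i ≤ 1)
    (i : Fin n) (x : Fin n → Bool) : 0 ≤ rr p i x := by
  unfold rr
  apply Finset.prod_nonneg
  intro j _
  by_cases hj : j = i
  · simp [hj]
  · rw [if_neg hj]
    split
    · exact hp0 j
    · linarith [hp1 j]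

lemma cnt_update {n : ℕ} (i : Fin n) (x : Fin n → Bool) (hx : x i = false) :
    cnt (Function.update x i true) = cnt x + 1 := by
  unfold cnt
  have e : ∀ b : Bool, (fun j => if (Function.update x i b) j then 1 else 0)
      = Function.update (fun j => if x j then 1 else 0) i (if b then 1 else 0) := by
    intro b
    funext j
    by_cases hj : j = i
    · subst hj; simp
    · rw [Function.update_of_ne hj, Function.update_of_ne hj]
  calc ∑ j, (if (Function.update x i true) j then 1 else 0)
      = ∑ j, Function.update (fun j => if x j then 1 else 0) i
          (if (true : Bool) then 1 else 0) j := by rw [e true]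
    _ = 1 + ∑ j ∈ Finset.univ \ {i}, (if x j then 1 else 0) := by
        rw [if_pos rfl]
        exact Finset.sum_update_of_mem (Finset.mem_univ i) _ _
    _ = (∑ j, (if x j then 1 else 0)) + 1 := by
        rw [Finset.sdiff_singleton_eq_erase,
          ← Finset.add_sum_erase Finset.univ (fun j => if x j then 1 else 0) (Finset.mem_univ i),
          hx]
        simp [Nat.add_comm]

lemma cnt_cast {n : ℕ} (x : Fin n → Bool) :
    ((cnt x : ℕ) : ℝ) = ∑ i, (if x i then (1:ℝ) else 0) := by
  unfold cnt
  push_cast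
  apply Finset.sum_congr rfl
  intro i _
  split <;> simp

lemma core {n : ℕ} (p : Fin n → ℝ) (hp0 : ∀ i, 0 ≤ p i) (hp1 : ∀ i, p i ≤ 1)
    {lam : ℝ} (hlam : lam = ∑ i, p i) (h : 0 < lam) (A : Set ℕ) :
    |(∑ x : Fin n → Bool, if cnt x ∈ A then qq p x else 0) - muA lam A|
      ≤ (1 - Real.exp (-lam)) / lam * ∑ i, (p i)^2 := by
  set c0 := (1 - Real.exp (-lam)) / lam with hc0def
  have hexp : Real.exp (-lam) ≤ 1 := by
    have := Real.exp_le_exp.mpr (by linarith : -lam ≤ 0)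
    simpa using this
  have hc0 : 0 ≤ c0 := by
    rw [hc0def]
    apply div_nonneg (by linarith) h.le
  have e0 : (∑ x : Fin n → Bool, if cnt x ∈ A then qq p x else 0) - muA lam A
      = ∑ x : Fin n → Bool, qq p x * (indA A (cnt x) - muA lam A) := by
    have e1 : ∀ x : Fin n → Bool, qq p x * (indA A (cnt x) - muA lam A)
        = (if cnt x ∈ A then qq p x else 0) - muA lam A * qq p x := by
      intro x; unfold indA; split <;> ring
    rw [Finset.sum_congr rfl (fun x _ => e1 x), Finset.sum_sub_distrib,
      ← Finset.mul_sum, sum_qq, mul_one]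
  have e2 : ∀ x : Fin n → Bool, qq p x * (indA A (cnt x) - muA lam A)
      = ∑ i, (qq p x * (p i * ff lam A (cnt x + 1)
          - (if x i then 1 else 0) * ff lam A (cnt x))) := by
    intro x
    rw [← stein h A (cnt x), ← Finset.mul_sum]
    congr 1
    rw [Finset.sum_sub_distrib, ← Finset.sum_mul, ← Finset.sum_mul, ← hlam, ← cnt_cast]
  rw [e0, Finset.sum_congr rfl (fun x _ => e2 x), Finset.sum_comm]
  set F := fun i : Fin n => Finset.univ.filter (fun x : Fin n → Bool => x i = false) with hF
  have e4 : ∀ i : Fin n,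
      (∑ x : Fin n → Bool, (qq p x * (p i * ff lam A (cnt x + 1)
          - (if x i then 1 else 0) * ff lam A (cnt x))))
      = ∑ x ∈ F i, rr p i x * (p i^2 * (ff lam A (cnt x + 2) - ff lam A (cnt x + 1))) := by
    intro i
    rw [sum_split i]
    apply Finset.sum_congr rfl
    intro x hx
    simp only [hF, Finset.mem_filter, Finset.mem_univ, true_and] at hx
    have hq1 : qq p x = (1 - p i) * rr p i x := by
      rw [qq_split p i x, hx]; simp
    have hq2 : qq p (Function.update x i true) = p i * rr p i x := by
      rw [qq_split p i (Function.update x i true), Function.update_self, rr_update]; simp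
    have hc : cnt (Function.update x i true) = cnt x + 1 := cnt_update i x hx
    rw [hq1, hq2, hc, hx, Function.update_self]
    simp only [if_pos rfl, Bool.false_eq_true, if_false]
    push_cast
    ring
  rw [Finset.sum_congr rfl (fun i _ => e4 i)]
  have hsum_rr : ∀ i : Fin n, ∑ x ∈ F i, rr p i x = 1 := by
    intro i
    have h2 := sum_split i (rr p i)
    rw [sum_rr] at h2
    have : ∀ x ∈ F i, rr p i x + rr p i (Function.update x i true) = 2 * rr p i x := by
      intro x hx
      rw [rr_update]; ring
    rw [Finset.sum_congr rfl this, ← Finset.mul_sum] at h2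
    linarith
  have hKi : ∀ i : Fin n,
      |∑ x ∈ F i, rr p i x * (p i^2 * (ff lam A (cnt x + 2) - ff lam A (cnt x + 1)))|
        ≤ p i^2 * c0 := by
    intro i
    calc |∑ x ∈ F i, rr p i x * (p i^2 * (ff lam A (cnt x + 2) - ff lam A (cnt x + 1)))|
        ≤ ∑ x ∈ F i, |rr p i x * (p i^2 * (ff lam A (cnt x + 2) - ff lam A (cnt x + 1)))| :=
          Finset.abs_sum_le_sum_abs _ _
      _ ≤ ∑ x ∈ F i, rr p i x * (p i^2 * c0) := by
          apply Finset.sum_le_sum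
          intro x _
          rw [abs_mul, abs_mul]
          rw [abs_of_nonneg (rr_nonneg hp0 hp1 i x), abs_of_nonneg (sq_nonneg (p i))]
          apply mul_le_mul_of_nonneg_left _ (rr_nonneg hp0 hp1 i x)
          apply mul_le_mul_of_nonneg_left _ (sq_nonneg (p i))
          exact ff_abs h A (cnt x)
      _ = p i^2 * c0 := by rw [← Finset.sum_mul, hsum_rr i, one_mul]
  calc |∑ i, ∑ x ∈ F i, rr p i x * (p i^2 * (ff lam A (cnt x + 2) - ff lam A (cnt x + 1)))|
      ≤ ∑ i, |∑ x ∈ F i, rr p i x * (p i^2 * (ff lam A (cnt x + 2) - ff lam A (cnt x + 1)))| :=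
        Finset.abs_sum_le_sum_abs _ _
    _ ≤ ∑ i, p i^2 * c0 := Finset.sum_le_sum (fun i _ => hKi i)
    _ = c0 * ∑ i, (p i)^2 := by rw [← Finset.sum_mul]; ring
/-- Poisson approximation for a sum of independent Bernoulli variables:
`d_tv(L(W), Po(λ)) ≤ ((1 - e^{-λ})/λ) ∑ pᵢ²` where `W = ∑ Iᵢ`,
`P(Iᵢ = 1) = pᵢ` and `λ = ∑ pᵢ`. The total variation distance is expressed via
an arbitrary subset `A` of the nonnegative integers. -/
theorem poisson_approx_bernoulli_sum_dtv
    {Ω : Type*} [MeasurableSpace Ω] (P : Measure Ω) [IsProbabilityMeasure P]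
    (n : ℕ) (I : Fin n → Ω → ℕ)
    (hmeas : ∀ i, Measurable (I i))
    (hind : ∀ i ω, I i ω ≤ 1)
    (hindep : iIndepFun I P)
    (p : Fin n → ℝ)
    (hp : ∀ i, p i = (P {ω | I i ω = 1}).toReal)
    (lam : ℝ) (hlam : lam = ∑ i, p i) (hlampos : 0 < lam) :
    ∀ A : Set ℕ,
      |(P {ω | (∑ i, I i ω) ∈ A}).toReal
        - ∑' k : ℕ, if k ∈ A then Real.exp (-lam) * lam ^ k / (k.factorial : ℝ) else 0|
      ≤ (1 - Real.exp (-lam)) / lam * ∑ i, (p i) ^ 2 := by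
  intro A
  -- identify the tsum with muA
  have hmu : (∑' k : ℕ, if k ∈ A then Real.exp (-lam) * lam ^ k / (k.factorial : ℝ) else 0)
      = muA lam A := by
    unfold muA indA pp
    apply tsum_congr
    intro k
    split <;> simp
  -- basic facts about p
  have hp0 : ∀ i, 0 ≤ p i := fun i => (hp i) ▸ ENNReal.toReal_nonneg
  have hp1 : ∀ i, p i ≤ 1 := by
    intro i
    rw [hp i]
    have h1 : (P {ω | I i ω = 1}).toReal ≤ (1 : ENNReal).toReal :=
      ENNReal.toReal_mono (by simp) prob_le_one
    simpa using h1
  -- the Bernoulli values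
  set bv : Bool → ℕ := (fun b => if b then 1 else 0) with hbv
  have hbv_inj : Function.Injective bv := by
    intro a b hab
    cases a <;> cases b <;> simp [hbv] at hab ⊢
  -- the atoms
  set E : (Fin n → Bool) → Set Ω := (fun x => ⋂ i, I i ⁻¹' {bv (x i)}) with hE
  have hEmeas : ∀ x, MeasurableSet (E x) :=
    fun x => MeasurableSet.iInter (fun i => hmeas i (MeasurableSet.of_discrete))
  have hatom : ∀ x, P (E x) = ∏ i, P (I i ⁻¹' {bv (x i)}) := by
    intro x
    have := hindep.measure_inter_preimage_eq_mul Finset.univ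
      (sets := fun i => {bv (x i)}) (fun i _ => MeasurableSet.of_discrete)
    rw [← this]
    congr 1
    simp [hE]
  -- single coordinate probabilities
  have hone : ∀ i, (P (I i ⁻¹' {1})).toReal = p i := by
    intro i
    rw [hp i]
    congr 1
  have hcompl : ∀ i, I i ⁻¹' {(0:ℕ)} = (I i ⁻¹' {1})ᶜ := by
    intro i
    ext ω
    simp only [Set.mem_preimage, Set.mem_singleton_iff, Set.mem_compl_iff]
    have := hind i ω
    omega
  have hzero : ∀ i, (P (I i ⁻¹' {(0:ℕ)})).toReal = 1 - p i := by
    intro i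
    rw [hcompl i, measure_compl (hmeas i MeasurableSet.of_discrete) (measure_ne_top P _),
      measure_univ, ENNReal.toReal_sub_of_le prob_le_one (by simp), ENNReal.toReal_one, hone i]
  have hq : ∀ x, (P (E x)).toReal = qq p x := by
    intro x
    rw [hatom x, ENNReal.toReal_prod]
    unfold qq
    apply Finset.prod_congr rfl
    intro i _
    cases hxi : x i
    · simp only [hbv, Bool.false_eq_true, if_false]
      exact hzero i
    · simp only [hbv, if_true]
      exact hone i
  -- the decomposition of the event
  set T : Finset (Fin n → Bool) := (Finset.univ.filter (fun x => cnt x ∈ A)) with hT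
  have hset : {ω | (∑ i, I i ω) ∈ A} = ⋃ x ∈ T, E x := by
    ext ω
    simp only [Set.mem_setOf_eq, Set.mem_iUnion, hE, Set.mem_iInter, Set.mem_preimage,
      Set.mem_singleton_iff, hT, Finset.mem_filter, Finset.mem_univ, true_and, exists_prop]
    constructor
    · intro hA
      refine ⟨fun i => decide (I i ω = 1), ?_, ?_⟩
      · have : cnt (fun i => decide (I i ω = 1)) = ∑ i, I i ω := by
          unfold cnt
          apply Finset.sum_congr rfl
          intro i _
          have := hind i ω
          interval_cases h' : I i ω <;> simp [h']
        rw [this]; exact hA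
      · intro i
        have := hind i ω
        interval_cases h' : I i ω <;> simp [hbv, h']
    · rintro ⟨x, hxA, hx⟩
      have : ∑ i, I i ω = cnt x := by
        unfold cnt
        apply Finset.sum_congr rfl
        intro i _
        rw [hx i]
      rw [this]; exact hxA
  have hdisj : Set.PairwiseDisjoint (T : Set (Fin n → Bool)) E := by
    intro x _ y _ hxy
    rw [Function.onFun, Set.disjoint_left]
    intro ω hωx hωy
    apply hxy
    funext i
    apply hbv_inj
    have h1 : I i ω = bv (x i) := by
      have := Set.mem_iInter.mp hωx i; simpa using this
    have h2 : I i ω = bv (y i) := by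
      have := Set.mem_iInter.mp hωy i; simpa using this
    rw [← h1, ← h2]
  have hdecomp : (P {ω | (∑ i, I i ω) ∈ A}).toReal
      = ∑ x : Fin n → Bool, if cnt x ∈ A then qq p x else 0 := by
    rw [hset, measure_biUnion_finset hdisj (fun x _ => hEmeas x),
      ENNReal.toReal_sum (fun x _ => measure_ne_top P _)]
    rw [Finset.sum_filter]
    apply Finset.sum_congr rfl
    intro x _
    split
    · exact hq x
    · rfl
  rw [hmu, hdecomp]
  exact core p hp0 hp1 hlam hlampos A
end
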